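/- A hard-core configuration on the 2K×3L triangular grid Λ cannot simultaneously display a vertical bridge and a horizontal bridge of different colors: if σ ∈ X agrees with x ∈ {a,b,c} on some vertical stripe C and agrees with y ∈ {a,b,c} on some horizontal stripe S, then x = y. -/

import Mathlib

open Finset

variable (K L : ℕ) [NeZero K] [NeZero L]

/-- Vertices of the `2K × 3L` triangular grid: pairs `(i,j) ∈ (ℤ/2K) × (ℤ/6L)` with `i+j` even. -/
abbrev Vert (K L : ℕ) [NeZero K] [NeZero L] : Type :=
  {p : ZMod (2 * K) × ZMod (6 * L) // (p.1.val + p.2.val) % 2 = 0}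

/-- Adjacency in the triangular grid with periodic boundary conditions. -/
abbrev Adj (v w : Vert K L) : Prop :=
  (w.1.1 = v.1.1 ∧ (w.1.2 = v.1.2 + 2 ∨ w.1.2 = v.1.2 - 2)) ∨
  ((w.1.1 = v.1.1 + 1 ∨ w.1.1 = v.1.1 - 1) ∧ (w.1.2 = v.1.2 + 1 ∨ w.1.2 = v.1.2 - 1))

/-- A particle configuration on the grid. -/
abbrev Cfg (K L : ℕ) [NeZero K] [NeZero L] : Type := Vert K L → Bool

/-- Hard-core condition: no two adjacent occupied sites. -/
abbrev HardCore (σ : Cfg K L) : Prop :=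
  ∀ v w : Vert K L, Adj K L v w → ¬(σ v = true ∧ σ w = true)

/-- Number of particles of a configuration. -/
def nParticles (σ : Cfg K L) : ℕ := (univ.filter fun v => σ v = true).card

/-- The energy (Hamiltonian) `H(σ) = -Σ_v σ(v)`. -/
def energy (σ : Cfg K L) : ℤ := -(nParticles K L σ : ℤ)

/-- The configuration `a`: indicator of `Λ_a` (columns `j ≡ 0 (mod 3)`). -/
def confA : Cfg K L := fun v => decide (v.1.2.val % 3 = 0)

/-- The configuration `b`: indicator of `Λ_b` (columns `j ≡ 1 (mod 3)`). -/
def confB : Cfg K L := fun v => decide (v.1.2.val % 3 = 1)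

/-- The configuration `c`: indicator of `Λ_c` (columns `j ≡ 2 (mod 3)`). -/
def confC : Cfg K L := fun v => decide (v.1.2.val % 3 = 2)

/-- A path in the energy landscape: a finite sequence of hard-core configurations,
consecutive ones differing in at most one vertex. -/
structure HCPath (σ σ' : Cfg K L) where
  n : ℕ
  ω : Fin (n + 1) → Cfg K L
  first : ω 0 = σ
  last : ω (Fin.last n) = σ'
  hc : ∀ i, HardCore K L (ω i)
  step : ∀ i : Fin n,
    ((univ : Finset (Vert K L)).filter fun v => ω i.castSucc v ≠ ω i.succ v).card ≤ 1

/-- Height of a path: maximal energy along it. -/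
noncomputable def pathHeight {σ σ' : Cfg K L} (p : HCPath K L σ σ') : ℤ :=
  Finset.univ.sup' Finset.univ_nonempty fun i => energy K L (p.ω i)

/-- Communication height `Φ(σ,σ')`: minimal height over all paths from `σ` to `σ'`. -/
noncomputable def commHeight (σ σ' : Cfg K L) : ℤ :=
  sInf {h : ℤ | ∃ p : HCPath K L σ σ', pathHeight K L p = h}

/-- The horizontal stripe `S_i = r_{2i} ∪ r_{2i+1}`. -/
abbrev inHStripe (i : ℕ) (v : Vert K L) : Prop :=
  v.1.1 = ((2 * i : ℕ) : ZMod (2 * K)) ∨ v.1.1 = ((2 * i + 1 : ℕ) : ZMod (2 * K))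

/-- The vertical stripe `C_j = c_j ∪ c_{j+1} ∪ c_{j+2}` (column indices mod `6L`). -/
abbrev inVStripe (j : ℕ) (v : Vert K L) : Prop :=
  v.1.2 = ((j : ℕ) : ZMod (6 * L)) ∨ v.1.2 = ((j + 1 : ℕ) : ZMod (6 * L)) ∨
    v.1.2 = ((j + 2 : ℕ) : ZMod (6 * L))

/-- Two configurations agree on a region. -/
def agreesOn (P : Vert K L → Prop) (σ τ : Cfg K L) : Prop := ∀ v, P v → σ v = τ v

lemma exists_lt_three_val_natCast_add_mod_three {n : ℕ} (hn : 3 ∣ n) (j : ℕ) {r : ℕ}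
    (hr : r < 3) : ∃ k < 3, ((j + k : ℕ) : ZMod n).val % 3 = r :=
  ⟨(r + 3 - j % 3) % 3, by omega, by rw [ZMod.val_natCast, Nat.mod_mod_of_dvd _ hn]; omega⟩

lemma inVStripe_of_snd_eq_natCast_add {j k : ℕ} (hk : k < 3) {v : Vert K L}
    (hv : v.1.2 = ((j + k : ℕ) : ZMod (6 * L))) : inVStripe K L j v := by
  interval_cases k
  · exact Or.inl hv
  · exact Or.inr (Or.inl hv)
  · exact Or.inr (Or.inr hv)

/-- Rows `2i` and `2i+1` have opposite parities, so one of them carries column `c`. -/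
lemma exists_inHStripe_snd_eq {i : ℕ} (hi : i < K) (c : ZMod (6 * L)) :
    ∃ v : Vert K L, inHStripe K L i v ∧ v.1.2 = c := by
  have hrow : 2 * i + c.val % 2 < 2 * K := by omega
  refine ⟨⟨(((2 * i + c.val % 2 : ℕ) : ZMod (2 * K)), c), ?_⟩, ?_, rfl⟩
  · show (((2 * i + c.val % 2 : ℕ) : ZMod (2 * K)).val + c.val) % 2 = 0
    rw [ZMod.val_natCast_of_lt hrow]
    omega
  · rcases Nat.mod_two_eq_zero_or_one c.val with h | h
    · exact Or.inl (by simp only [h, add_zero])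
    · exact Or.inr (by simp only [h])

lemma exists_inVStripe_inHStripe_val_mod_three (j : ℕ) {i r : ℕ} (hi : i < K) (hr : r < 3) :
    ∃ v : Vert K L, inVStripe K L j v ∧ inHStripe K L i v ∧ v.1.2.val % 3 = r := by
  obtain ⟨k, hk, hkr⟩ :=
    exists_lt_three_val_natCast_add_mod_three ⟨2 * L, by ring⟩ j (n := 6 * L) hr
  obtain ⟨v, hvi, hvc⟩ := exists_inHStripe_snd_eq K L hi ((j + k : ℕ) : ZMod (6 * L))
  exact ⟨v, inVStripe_of_snd_eq_natCast_add K L hk hvc, hvi, hvc ▸ hkr⟩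

lemma exists_eq_decide_val_mod_three {x : Cfg K L}
    (hx : x = confA K L ∨ x = confB K L ∨ x = confC K L) :
    ∃ r < 3, x = fun v => decide (v.1.2.val % 3 = r) := by
  rcases hx with rfl | rfl | rfl
  exacts [⟨0, by norm_num, rfl⟩, ⟨1, by norm_num, rfl⟩, ⟨2, by norm_num, rfl⟩]

/-- Pick a vertex in both stripes on a column of `x`'s colour class: there `σ` is occupied,
so that column also belongs to `y`'s colour class. -/
theorem no_bichromatic_bridges
    (σ : Cfg K L) (x y : Cfg K L)
    (hx : x = confA K L ∨ x = confB K L ∨ x = confC K L)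
    (hy : y = confA K L ∨ y = confB K L ∨ y = confC K L)
    (hvert : ∃ j : ℕ, j < 6 * L ∧ agreesOn K L (inVStripe K L j) σ x)
    (hhor : ∃ i : ℕ, i < K ∧ agreesOn K L (inHStripe K L i) σ y) :
    x = y := by
  obtain ⟨j, -, hσx⟩ := hvert
  obtain ⟨i, hi, hσy⟩ := hhor
  obtain ⟨r, hr, rfl⟩ := exists_eq_decide_val_mod_three K L hx
  obtain ⟨s, -, rfl⟩ := exists_eq_decide_val_mod_three K L hy
  obtain ⟨v, hvj, hvi, hvr⟩ := exists_inVStripe_inHStripe_val_mod_three K L j hi hr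
  have hσv : decide (v.1.2.val % 3 = s) = decide (v.1.2.val % 3 = r) :=
    (hσy v hvi).symm.trans (hσx v hvj)
  have hrs : r = s := by simpa [hvr] using hσv
  rw [hrs]
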